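/- arXiv:1309.5414 — 12 statements merged into one kernel-verified Lean document; each statement's English description precedes it below -/
import Mathlib

section
/- Let R be a commutative ring with identity in which 2 is a unit, G ∈ R^{m×n}, and S ⊆ R^{n×m} an R-submodule that is quadratically invariant with respect to G (i.e., KGK ∈ S for all K ∈ S). Then for every K ∈ S and every i ≥ 1, K(GK)^i ∈ S. -/
theorem stmt_3 {R : Type*} [CommRing R] {m n : ℕ} (h2 : IsUnit (2 : R))
    (G : Matrix (Fin m) (Fin n) R) (S : Submodule R (Matrix (Fin n) (Fin m) R))
    (hQI : ∀ K ∈ S, K * G * K ∈ S) :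
    ∀ K ∈ S, ∀ i : ℕ, 1 ≤ i → K * (G * K) ^ i ∈ S := by
  obtain ⟨c, hc⟩ := h2.exists_left_inv
  intro K hK i hi
  induction i with
  | zero => omega
  | succ j ih =>
    rcases Nat.eq_zero_or_pos j with hj | hj
    · subst hj
      rw [pow_one, ← Matrix.mul_assoc]
      exact hQI K hK
    · have hL : K * (G * K) ^ j ∈ S := ih hj
      set L := K * (G * K) ^ j with hLdef
      have hpol : K * G * L + L * G * K ∈ S := by
        have hsum := hQI (K + L) (S.add_mem hK hL)
        have hexp : (K + L) * G * (K + L) =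
            (K * G * K + L * G * L) + (K * G * L + L * G * K) := by
          simp only [Matrix.add_mul, Matrix.mul_add]
          abel
        have := S.sub_mem hsum (S.add_mem (hQI K hK) (hQI L hL))
        rw [hexp] at this
        simpa using this
      have h1 : K * G * L = K * (G * K) ^ (j + 1) := by
        rw [hLdef, pow_succ']
        simp only [Matrix.mul_assoc]
      have h2' : L * G * K = K * (G * K) ^ (j + 1) := by
        rw [hLdef, pow_succ]
        simp only [Matrix.mul_assoc]
      have hid : K * G * L + L * G * K = (2 : R) • (K * (G * K) ^ (j + 1)) := by
        rw [h1, h2', two_smul]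
      have hmem : (2 : R) • (K * (G * K) ^ (j + 1)) ∈ S := hid ▸ hpol
      have := S.smul_mem c hmem
      rwa [smul_smul, hc, one_smul] at this
end

section
/- Let R be a commutative ring with identity. If for some N ≥ n there exists a left-invertible N×n Vandermonde matrix over R, then the ideal of R generated by the determinants of all n×n Vandermonde matrices is the unit ideal. -/
/-!
Suppose the Vandermonde determinants generate a proper ideal, and let `k` be the residue field of
a maximal ideal containing it. Over `k` the left inverse survives, so the `N × n` Vandermonde
matrix of the reduced points has trivial kernel. Were there fewer than `n` distinct reduced
points, the coefficient vector of the monic polynomial vanishing on them would be a nonzero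
kernel vector; hence some `n` of the points reduce to distinct elements of `k`, and their
Vandermonde determinant is nonzero in `k`, i.e. lies outside the maximal ideal.
-/

open Polynomial Finset

namespace Matrix

variable {R : Type*} [CommRing R] {ι : Type*} [Fintype ι] {n : ℕ}

theorem exists_ne_zero_mulVec_pow_eq_zero [Nontrivial R] [DecidableEq R] (v : ι → R)
    (hv : #(univ.image v) < n) :
    ∃ x : Fin n → R, x ≠ 0 ∧ (of fun (i : ι) (j : Fin n) => v i ^ (j : ℕ)) *ᵥ x = 0 := by
  set p : R[X] := ∏ s ∈ univ.image v, (X - C s)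
  have hp : p.Monic := monic_prod_of_monic _ _ fun s _ => monic_X_sub_C s
  have hdeg : p.natDegree < n := by
    rwa [natDegree_prod_of_monic _ _ fun s _ => monic_X_sub_C s, sum_const_nat
      fun s _ => natDegree_X_sub_C s, mul_one]
  refine ⟨fun j => p.coeff j, fun h => ?_, funext fun i => ?_⟩
  · simpa [hp.coeff_natDegree] using congr_fun h ⟨_, hdeg⟩
  · have hroot : p.eval (v i) = 0 := by
      rw [eval_prod]
      exact prod_eq_zero (mem_image_of_mem v (mem_univ i)) (by simp)
    simp only [mulVec, dotProduct, of_apply, Pi.zero_apply]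
    rw [Fin.sum_univ_eq_sum_range (fun j => v i ^ j * p.coeff j), ← hroot,
      eval_eq_sum_range' hdeg]
    simp only [mul_comm]

theorem le_card_image_of_mul_pow_eq_one [Nontrivial R] [DecidableEq R] {v : ι → R}
    {L : Matrix (Fin n) ι R} (hL : L * of (fun (i : ι) (j : Fin n) => v i ^ (j : ℕ)) = 1) :
    n ≤ #(univ.image v) := by
  by_contra! hv
  obtain ⟨x, hx, hVx⟩ := exists_ne_zero_mulVec_pow_eq_zero v hv
  apply hx
  rw [← one_mulVec x, ← hL, ← mulVec_mulVec, hVx, mulVec_zero]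

end Matrix

theorem Finset.exists_injective_comp_of_le_card_image {α β : Type*} [Fintype α] [DecidableEq β]
    {f : α → β} {n : ℕ} (hn : n ≤ #(univ.image f)) :
    ∃ σ : Fin n → α, Function.Injective (f ∘ σ) := by
  obtain ⟨s, -, hinj, himg⟩ := exists_subset_injOn_image_eq_of_surjOn Set.univ (univ.image f)
    fun _ hb => by simpa using hb
  rw [← himg, card_image_of_injOn hinj] at hn
  obtain ⟨e⟩ := Function.Embedding.nonempty_of_card_le (by simpa using hn :
    Fintype.card (Fin n) ≤ Fintype.card s)
  exact ⟨fun j => e j, fun a b h => e.injective (Subtype.ext (hinj (e a).2 (e b).2 h))⟩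

theorem stmt_7_general {R : Type*} [CommRing R] (n N : ℕ)
    (v : Fin N → R) (L : Matrix (Fin n) (Fin N) R)
    (hL : L * Matrix.of (fun (i : Fin N) (j : Fin n) => v i ^ (j : ℕ)) = 1) :
    Ideal.span {d : R | ∃ w : Fin n → R, d = (Matrix.vandermonde w).det} = ⊤ := by
  classical
  by_contra hspan
  obtain ⟨m, hm, hle⟩ := Ideal.exists_le_maximal _ hspan
  let _ := Ideal.Quotient.field m
  let f := Ideal.Quotient.mk m
  have hLf : L.map f * Matrix.of (fun (i : Fin N) (j : Fin n) => f (v i) ^ (j : ℕ)) = 1 := by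
    rw [← Matrix.map_one f (map_zero f) (map_one f), ← hL, Matrix.map_mul]
    congr
  obtain ⟨σ, hσ⟩ :=
    Finset.exists_injective_comp_of_le_card_image (Matrix.le_card_image_of_mul_pow_eq_one hLf)
  have hdet : f (Matrix.vandermonde (v ∘ σ)).det ≠ 0 := by
    rw [RingHom.map_det]
    convert Matrix.det_vandermonde_ne_zero_iff.2 hσ
    ext; simp [Matrix.vandermonde]
  exact hdet (Ideal.Quotient.eq_zero_iff_mem.2 (hle (Ideal.subset_span ⟨_, rfl⟩)))

theorem stmt_7 {R : Type*} [CommRing R] (n N : ℕ) (hN : n ≤ N)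
    (v : Fin N → R) (L : Matrix (Fin n) (Fin N) R)
    (hL : L * Matrix.of (fun (i : Fin N) (j : Fin n) => v i ^ (j : ℕ)) = 1) :
    Ideal.span {d : R | ∃ w : Fin n → R, d = (Matrix.vandermonde w).det} = ⊤ :=
  stmt_7_general n N v L hL
end

section
/- Let R be a commutative ring with identity. If every residue field of R (i.e., R/M for every maximal ideal M) has at least n elements, then the ideal generated by the determinants of all n×n Vandermonde matrices over R equals R. -/
theorem stmt_8 {R : Type*} [CommRing R] (n : ℕ)
    (hres : ∀ M : Ideal R, M.IsMaximal → ∃ f : Fin n → R ⧸ M, Function.Injective f) :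
    Ideal.span {d : R | ∃ w : Fin n → R, d = (Matrix.vandermonde w).det} = ⊤ := by
  by_contra h
  obtain ⟨M, hM, hle⟩ := Ideal.exists_le_maximal _ h
  obtain ⟨f, hf⟩ := hres M hM
  choose w hw using fun i => Ideal.Quotient.mk_surjective (I := M) (f i)
  have hmem : (Matrix.vandermonde w).det ∈ M := hle (Ideal.subset_span ⟨w, rfl⟩)
  have h0 : Ideal.Quotient.mk M (Matrix.vandermonde w).det = 0 :=
    (Ideal.Quotient.eq_zero_iff_mem).2 hmem
  rw [RingHom.map_det] at h0
  have : (Matrix.vandermonde w).map (Ideal.Quotient.mk M) = Matrix.vandermonde f := by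
    ext i j
    simp [Matrix.vandermonde, hw]
  rw [show ((Ideal.Quotient.mk M).mapMatrix (Matrix.vandermonde w)) = Matrix.vandermonde f from this] at h0
  rw [Matrix.det_vandermonde] at h0
  haveI := hM
  rw [Finset.prod_eq_zero_iff] at h0
  obtain ⟨i, hi, h1⟩ := h0
  rw [Finset.prod_eq_zero_iff] at h1
  obtain ⟨j, hj, h2⟩ := h1
  exact (Finset.mem_Ioi.1 hj).ne' (hf (sub_eq_zero.1 h2))
end

section
/- Let R be a commutative ring with identity. If the ideal generated by the determinants of all n×n Vandermonde matrices over R is not the unit ideal, then there exists a maximal ideal M of R such that the residue field R/M has fewer than n elements. -/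
theorem stmt_9 {R : Type*} [CommRing R] (n : ℕ)
    (h : Ideal.span {d : R | ∃ w : Fin n → R, d = (Matrix.vandermonde w).det} ≠ ⊤) :
    ∃ M : Ideal R, M.IsMaximal ∧ ¬∃ f : Fin n → R ⧸ M, Function.Injective f := by
  obtain ⟨M, hM, hsub⟩ := Ideal.exists_le_maximal _ h
  refine ⟨M, hM, ?_⟩
  rintro ⟨f, hf⟩
  haveI := hM.isPrime
  choose w hw using fun i => Ideal.Quotient.mk_surjective (I := M) (f i)
  have hdet : (Ideal.Quotient.mk M) (Matrix.vandermonde w).det = 0 := by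
    rw [Ideal.Quotient.eq_zero_iff_mem]
    exact hsub (Ideal.subset_span ⟨w, rfl⟩)
  rw [RingHom.map_det] at hdet
  have hvm : (Ideal.Quotient.mk M).mapMatrix (Matrix.vandermonde w) =
      Matrix.vandermonde f := by
    ext i j
    simp [Matrix.vandermonde, ← hw i]
  rw [hvm] at hdet
  exact (Matrix.det_vandermonde_ne_zero_iff.mpr hf) hdet
end

section
/- Let R be a commutative ring with identity such that every residue field of R has at least n elements, and let H be the R-module generated by elements H_1,...,H_n of some R-module. Then H is also generated by the set { H_1 + r H_2 + ... + r^{n-1} H_n : r ∈ R }. -/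
theorem stmt_11 {R : Type*} [CommRing R] {N : Type*} [AddCommGroup N] [Module R N]
    (n : ℕ)
    (hres : ∀ M : Ideal R, M.IsMaximal → ∃ f : Fin n → R ⧸ M, Function.Injective f)
    (H : Fin n → N) :
    Submodule.span R (Set.range H) =
      Submodule.span R {x : N | ∃ r : R, x = ∑ i : Fin n, r ^ (i : ℕ) • H i} := by
  set K := Submodule.span R {x : N | ∃ r : R, x = ∑ i : Fin n, r ^ (i : ℕ) • H i} with hK
  apply le_antisymm
  · rw [Submodule.span_le]
    rintro x ⟨j, rfl⟩
    -- key: for every maximal ideal M, there is d ∉ M with d • H j ∈ K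
    have key : ∀ M : Ideal R, M.IsMaximal → ∃ d : R, d ∉ M ∧ d • H j ∈ K := by
      intro M hM
      obtain ⟨f, hf⟩ := hres M hM
      choose r hr using fun k => Ideal.Quotient.mk_surjective (I := M) (f k)
      set V := Matrix.vandermonde r with hV
      refine ⟨V.det, ?_, ?_⟩
      · -- det not in M since its image in the residue field is a product of nonzero terms
        intro hdet
        have h0 : Ideal.Quotient.mk M V.det = 0 := (Ideal.Quotient.eq_zero_iff_mem).2 hdet
        rw [RingHom.map_det] at h0
        have hmap : (Ideal.Quotient.mk M).mapMatrix V = Matrix.vandermonde f := by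
          ext i k
          simp [hV, Matrix.vandermonde, hr, RingHom.mapMatrix_apply]
        rw [hmap, Matrix.det_vandermonde] at h0
        haveI := hM.isPrime
        have := Finset.prod_eq_zero_iff.mp h0
        obtain ⟨i, _, hi⟩ := this
        obtain ⟨k, hk, hik⟩ := Finset.prod_eq_zero_iff.mp hi
        have : f k = f i := by
          have := sub_eq_zero.mp hik
          exact this
        have : k = i := hf this
        simp [this] at hk
      · -- d • H j is an R-combination of the generators of K
        have hcalc : V.det • H j =
            ∑ k : Fin n, V.adjugate j k • (∑ i : Fin n, V k i • H i) := by
          simp_rw [Finset.smul_sum, smul_smul]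
          rw [Finset.sum_comm]
          have : ∀ i : Fin n, ∑ k : Fin n, (V.adjugate j k * V k i) • H i =
              ((V.adjugate * V) j i) • H i := by
            intro i
            rw [← Finset.sum_smul]
            rfl
          simp_rw [this, Matrix.adjugate_mul]
          simp [Matrix.smul_apply, Matrix.one_apply, ite_smul]
        rw [hcalc]
        refine Submodule.sum_mem _ fun k _ => Submodule.smul_mem _ _ ?_
        apply Submodule.subset_span
        exact ⟨r k, by simp [hV, Matrix.vandermonde]⟩
    -- the ideal of a with a • H j ∈ K is the whole ring
    let I : Ideal R :=
      { carrier := {a : R | a • H j ∈ K}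
        add_mem' := fun ha hb => by simpa [add_smul] using Submodule.add_mem K ha hb
        zero_mem' := by simp
        smul_mem' := fun c a ha => by
          simpa [smul_smul] using Submodule.smul_mem K c ha }
    have hItop : I = ⊤ := by
      by_contra hI
      obtain ⟨M, hM, hIM⟩ := Ideal.exists_le_maximal I hI
      obtain ⟨d, hdM, hdK⟩ := key M hM
      exact hdM (hIM hdK)
    have h1 : (1 : R) ∈ I := hItop ▸ Submodule.mem_top
    have h2 : (1 : R) • H j ∈ K := h1
    simpa using h2
  · rw [Submodule.span_le]
    rintro x ⟨r, rfl⟩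
    exact Submodule.sum_mem _ fun i _ =>
      Submodule.smul_mem _ _ (Submodule.subset_span ⟨i, rfl⟩)
end

section
/- Let R be a commutative ring with identity in which every residue field has at least n elements. If f ∈ R[x] is a polynomial of degree at most n-1 with f(r) = 0 for all r ∈ R, then f = 0. -/
/-- A polynomial of degree `< n` over a commutative ring vanishing at `n` points
whose pairwise differences are units is zero. -/
lemma aux_vanish {S : Type*} [CommRing S] :
    ∀ (n : ℕ) (w : Fin n → S), (∀ i j, i ≠ j → IsUnit (w i - w j)) →
    ∀ p : Polynomial S, p.degree < n → (∀ i, p.eval (w i) = 0) → p = 0 := by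
  intro n
  induction n with
  | zero =>
    intro w _ p hdeg _
    exact Polynomial.degree_eq_bot.mp (Nat.WithBot.lt_zero_iff.mp (by exact_mod_cast hdeg))
  | succ n ih =>
    intro w hw p hdeg hz
    have hroot : Polynomial.IsRoot p (w 0) := hz 0
    obtain ⟨q, hq⟩ := (Polynomial.dvd_iff_isRoot).mpr hroot
    by_cases hq0 : q = 0
    · simp [hq, hq0]
    rcases subsingleton_or_nontrivial S with hS | hS
    · exact absurd (Subsingleton.elim q 0) hq0
    have hdegq : q.degree < n := by
      have h1 : p.degree = q.degree + 1 := by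
        rw [hq, mul_comm, (Polynomial.monic_X_sub_C (w 0)).degree_mul,
          Polynomial.degree_X_sub_C]
      rw [h1] at hdeg
      rw [Polynomial.degree_eq_natDegree hq0] at hdeg ⊢
      have h2 : (q.natDegree + 1 : ℕ) < (n + 1 : ℕ) := by exact_mod_cast hdeg
      exact_mod_cast (by omega : q.natDegree < n)
    have hz' : ∀ i : Fin n, q.eval (w i.succ) = 0 := by
      intro i
      have h0 := hz i.succ
      rw [hq, Polynomial.eval_mul, Polynomial.eval_sub, Polynomial.eval_X,
        Polynomial.eval_C] at h0
      have hu : IsUnit (w i.succ - w 0) := hw _ _ (Fin.succ_ne_zero i)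
      exact (hu.mul_right_eq_zero).mp h0
    have := ih (fun i => w i.succ)
      (fun i j hij => hw _ _ (by simpa using fun h => hij (Fin.succ_injective _ h)))
      q hdegq hz'
    exact absurd this hq0

theorem stmt_12 {R : Type*} [CommRing R] (n : ℕ)
    (hres : ∀ M : Ideal R, M.IsMaximal → ∃ g : Fin n → R ⧸ M, Function.Injective g)
    (f : Polynomial R) (hdeg : f.degree < n) (hz : ∀ r : R, f.eval r = 0) :
    f = 0 := by
  by_contra hf
  rcases subsingleton_or_nontrivial R with hR | hR
  · exact hf (Subsingleton.elim f 0)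
  obtain ⟨k, hk⟩ : ∃ k, f.coeff k ≠ 0 := by
    by_contra h
    push_neg at h
    exact hf (Polynomial.ext fun k => by simp [h k])
  set c := f.coeff k with hc
  -- annihilator of c
  set ann : Ideal R := (Submodule.span R {c}).annihilator with hann
  have hann_ne_top : ann ≠ ⊤ := by
    intro h
    have h1 : (1 : R) ∈ ann := h ▸ trivial
    have := (Submodule.mem_annihilator).mp h1 c (Submodule.mem_span_singleton_self c)
    simp at this
    exact hk this
  obtain ⟨M, hM, hannM⟩ := Ideal.exists_le_maximal ann hann_ne_top
  haveI := hM
  obtain ⟨g, hg⟩ := hres M hM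
  -- lift g to R
  have hsurj := Ideal.Quotient.mk_surjective (I := M)
  choose v hv using fun i : Fin n => hsurj (g i)
  -- localization at M
  haveI : M.IsPrime := hM.isPrime
  let S := Localization.AtPrime M
  let φ : R →+* S := algebraMap R S
  have hφc : φ c ≠ 0 := by
    intro h
    obtain ⟨m, hm⟩ := (IsLocalization.map_eq_zero_iff M.primeCompl S c).mp h
    have hmann : (m : R) ∈ ann := by
      rw [Submodule.mem_annihilator]
      intro x hx
      obtain ⟨r, rfl⟩ := Submodule.mem_span_singleton.mp hx
      rw [smul_comm]
      simp [smul_eq_mul, hm]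
    exact m.2 (hannM hmann)
  have hunits : ∀ i j : Fin n, i ≠ j → IsUnit (φ (v i) - φ (v j)) := by
    intro i j hij
    have hmem : v i - v j ∈ M.primeCompl := by
      intro hmem
      have : Ideal.Quotient.mk M (v i - v j) = 0 := (Ideal.Quotient.eq_zero_iff_mem).mpr hmem
      rw [map_sub, hv, hv] at this
      exact hij (hg (sub_eq_zero.mp this))
    have := IsLocalization.map_units S (⟨v i - v j, hmem⟩ : M.primeCompl)
    simpa [map_sub] using this
  have hp : f.map φ = 0 := by
    apply aux_vanish n (fun i => φ (v i)) hunits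
    · exact lt_of_le_of_lt (Polynomial.degree_map_le) hdeg
    · intro i
      rw [Polynomial.eval_map, Polynomial.eval₂_hom, hz, map_zero]
  have : φ c = 0 := by
    have := congrArg (fun p => Polynomial.coeff p k) hp
    simpa [Polynomial.coeff_map] using this
  exact hφc this
end

section
/- Let G ∈ ℝ^{m×n} and let S ⊆ ℝ^{n×m} be a linear subspace. If S is quadratically invariant with respect to G (KGK ∈ S for all K ∈ S), then for every K ∈ S with I - GK invertible, K(I - GK)^{-1} ∈ S. -/
open Polynomial

theorem stmt_13 {m n : ℕ} (G : Matrix (Fin m) (Fin n) ℝ)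
    (S : Submodule ℝ (Matrix (Fin n) (Fin m) ℝ))
    (hQI : ∀ K ∈ S, K * G * K ∈ S) :
    ∀ K ∈ S, IsUnit (1 - G * K).det → K * (1 - G * K)⁻¹ ∈ S := by
  intro K hK hdet
  set M : Matrix (Fin m) (Fin m) ℝ := G * K with hM
  set A : Matrix (Fin m) (Fin m) ℝ := 1 - M with hA
  -- Step 1: K * M^j ∈ S for all j
  have hpow : ∀ j : ℕ, K * M ^ j ∈ S := by
    intro j
    induction j with
    | zero => simpa using hK
    | succ j ih =>
      have h1 : (K + K * M ^ j) * G * (K + K * M ^ j) ∈ S :=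
        hQI _ (S.add_mem hK ih)
      have h2 : K * G * K ∈ S := hQI K hK
      have h3 : (K * M ^ j) * G * (K * M ^ j) ∈ S := hQI _ ih
      have h4 : K * G * (K * M ^ j) + (K * M ^ j) * G * K ∈ S := by
        have := S.sub_mem (S.sub_mem h1 h2) h3
        convert this using 1
        simp only [Matrix.add_mul, Matrix.mul_add]
        abel
      have h5 : K * G * (K * M ^ j) = K * M ^ (j + 1) := by
        rw [hM, pow_succ']
        simp [Matrix.mul_assoc]
      have h6 : (K * M ^ j) * G * K = K * M ^ (j + 1) := by
        rw [hM, pow_succ]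
        simp [Matrix.mul_assoc]
      have h7 : (2 : ℝ) • (K * M ^ (j + 1)) ∈ S := by
        have : (2 : ℝ) • (K * M ^ (j + 1)) =
            K * G * (K * M ^ j) + (K * M ^ j) * G * K := by
          rw [h5, h6, two_smul]
        rw [this]; exact h4
      have := S.smul_mem (2 : ℝ)⁻¹ h7
      simpa [smul_smul] using this
  -- Step 2: K * aeval M q ∈ S for all polynomials q
  have hpoly : ∀ q : ℝ[X], K * aeval M q ∈ S := by
    intro q
    induction q using Polynomial.induction_on' with
    | add p q hp hq => rw [map_add, Matrix.mul_add]; exact S.add_mem hp hq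
    | monomial j a =>
      rw [aeval_monomial]
      have : K * (algebraMap ℝ _ a * M ^ j) = a • (K * M ^ j) := by
        rw [Algebra.algebraMap_eq_smul_one]
        simp [Matrix.mul_smul, Matrix.smul_mul]
      rw [this]
      exact S.smul_mem a (hpow j)
  -- Step 3: A⁻¹ is a polynomial in M
  have hch : aeval A A.charpoly = 0 := Matrix.aeval_self_charpoly A
  set p := A.charpoly with hp
  set c0 := p.coeff 0 with hc0
  have hsplit : X * p.divX + C c0 = p := Polynomial.X_mul_divX_add p
  have hmul : A * aeval A p.divX = -(c0 • (1 : Matrix (Fin m) (Fin m) ℝ)) := by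
    have := congrArg (aeval A) hsplit
    rw [map_add, map_mul, aeval_X, aeval_C, hch] at this
    rw [Algebra.algebraMap_eq_smul_one] at this
    exact add_eq_zero_iff_eq_neg.mp this
  have hc0unit : c0 ≠ 0 := by
    have hd := Matrix.det_eq_sign_charpoly_coeff A
    intro h0
    rw [← hp, ← hc0, h0, mul_zero] at hd
    rw [hd] at hdet
    exact (by simp : ¬ IsUnit (0 : ℝ)) hdet
  have hinv : A⁻¹ = (-c0)⁻¹ • aeval A p.divX := by
    apply Matrix.inv_eq_right_inv
    rw [Matrix.mul_smul, hmul, smul_neg, smul_smul, inv_neg, neg_mul,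
      inv_mul_cancel₀ hc0unit]
    simp
  -- Step 4: rewrite aeval A in terms of aeval M
  have hAM : aeval A p.divX = aeval M (p.divX.comp (1 - X)) := by
    rw [aeval_comp]
    congr 1
    rw [map_sub, aeval_X, map_one]
  rw [hinv, hAM, Matrix.mul_smul]
  exact S.smul_mem _ (hpoly _)
end

section
/- Let G ∈ ℝ^{m×n} and let S ⊆ ℝ^{n×m} be a linear subspace. Define M = {K : det(I - GK) ≠ 0} and h(K) = -K(I - GK)^{-1}. Then S is quadratically invariant with respect to G if and only if h(S ∩ M) = S ∩ M. -/
/-!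
If `S` is quadratically invariant, polarizing `K G K ∈ S` gives `K (G K)ⁱ ∈ S` for every `i`, and
by Cayley–Hamilton `(1 - G K)⁻¹` is a polynomial in `G K`, so `h K ∈ S`; as `h` is an involution
of `M`, it permutes `S ∩ M`. Conversely, if `h` maps `S ∩ M` into `S`, then
`K (1 - t G K)⁻¹ = -t⁻¹ h (t K) ∈ S` for small `t ≠ 0`, and the closed subspace `S` contains the
derivative `K G K` of this curve at `t = 0`.
-/

open Polynomial Filter Topology Set

namespace Matrix

variable {ι κ 𝕜 : Type*} [Fintype κ] [DecidableEq κ]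

theorem exists_inv_eq_aeval [Field 𝕜] (A : Matrix κ κ 𝕜) : ∃ p : 𝕜[X], A⁻¹ = aeval A p := by
  by_cases hA : IsUnit A.det
  swap
  · exact ⟨0, by rw [nonsing_inv_apply_not_isUnit A hA, map_zero]⟩
  rw [det_eq_sign_charpoly_coeff] at hA
  set c := A.charpoly.coeff 0
  have hc : c ≠ 0 := fun h0 => by simp [h0] at hA
  -- Cayley–Hamilton with the constant term `c` of the characteristic polynomial split off.
  have hCH : A * aeval A A.charpoly.divX + c • 1 = 0 := by
    have := congrArg (aeval A) (X_mul_divX_add A.charpoly)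
    rwa [aeval_self_charpoly, map_add, map_mul, aeval_X, aeval_C,
      Algebra.algebraMap_eq_smul_one] at this
  refine ⟨-c⁻¹ • A.charpoly.divX, inv_eq_right_inv ?_⟩
  rw [map_smul, mul_smul_comm, eq_neg_of_add_eq_zero_left hCH, smul_neg, neg_smul, neg_neg,
    smul_smul, inv_mul_cancel₀ hc, one_smul]

theorem exists_inv_one_sub_eq_aeval [Field 𝕜] (B : Matrix κ κ 𝕜) :
    ∃ p : 𝕜[X], (1 - B)⁻¹ = aeval B p := by
  obtain ⟨p, hp⟩ := exists_inv_eq_aeval (1 - B)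
  exact ⟨p.comp (1 - X), by simp [hp, aeval_comp]⟩

theorem continuousAt_inv_one_sub_smul [NontriviallyNormedField 𝕜] (B : Matrix κ κ 𝕜) :
    ContinuousAt (fun t : 𝕜 => (1 - t • B)⁻¹) 0 := by
  have hinv : ContinuousAt Inv.inv (1 - (0 : 𝕜) • B) := by
    refine continuousAt_matrix_inv _ ?_
    rw [zero_smul, sub_zero, det_one, Ring.inverse_eq_inv']
    exact continuousAt_inv₀ one_ne_zero
  exact hinv.comp (f := fun t : 𝕜 => 1 - t • B) (by fun_prop)

theorem mul_inv_one_sub_smul_sub_self [CommRing 𝕜] (K : Matrix ι κ 𝕜) (B : Matrix κ κ 𝕜)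
    (t : 𝕜) (h : IsUnit (1 - t • B).det) : K * (1 - t • B)⁻¹ - K = t • (K * B * (1 - t • B)⁻¹) :=
  calc K * (1 - t • B)⁻¹ - K = K * (1 - (1 - t • B)) * (1 - t • B)⁻¹ := by
        rw [Matrix.mul_sub, Matrix.sub_mul, Matrix.mul_one, Matrix.mul_assoc K,
          mul_nonsing_inv _ h, Matrix.mul_one]
    _ = t • (K * B * (1 - t • B)⁻¹) := by
        rw [sub_sub_cancel, Matrix.mul_smul, Matrix.smul_mul]

variable [Fintype ι]

noncomputable section ClosedLoop

variable [CommRing 𝕜] (G : Matrix κ ι 𝕜)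

-- `closedLoop G` and `wellPosed G` are the map `h` and the set `M` of the paper.
def closedLoop (K : Matrix ι κ 𝕜) : Matrix ι κ 𝕜 := -(K * (1 - G * K)⁻¹)

def wellPosed : Set (Matrix ι κ 𝕜) := {K | IsUnit (1 - G * K).det}

variable {G} {K : Matrix ι κ 𝕜}

theorem one_sub_mul_closedLoop (hK : K ∈ wellPosed G) :
    1 - G * closedLoop G K = (1 - G * K)⁻¹ := by
  rw [closedLoop, Matrix.mul_neg, sub_neg_eq_add, ← Matrix.mul_assoc]
  calc 1 + G * K * (1 - G * K)⁻¹ = 1 + (1 - (1 - G * K)) * (1 - G * K)⁻¹ := by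
        rw [sub_sub_cancel]
    _ = (1 - G * K)⁻¹ := by
        rw [Matrix.sub_mul, Matrix.one_mul, mul_nonsing_inv _ hK, add_sub_cancel]

theorem closedLoop_mem_wellPosed (hK : K ∈ wellPosed G) : closedLoop G K ∈ wellPosed G := by
  rw [wellPosed, mem_ofPred_eq, one_sub_mul_closedLoop hK]
  exact isUnit_nonsing_inv_det _ hK

theorem closedLoop_closedLoop (hK : K ∈ wellPosed G) : closedLoop G (closedLoop G K) = K := by
  rw [closedLoop, one_sub_mul_closedLoop hK, nonsing_inv_nonsing_inv _ hK, closedLoop,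
    Matrix.neg_mul, neg_neg, Matrix.mul_assoc, nonsing_inv_mul _ hK, Matrix.mul_one]

theorem closedLoop_smul (t : 𝕜) : closedLoop G (t • K) = -t • (K * (1 - t • (G * K))⁻¹) := by
  rw [closedLoop, Matrix.mul_smul, Matrix.smul_mul, neg_smul]

end ClosedLoop

end Matrix

namespace Submodule

open Matrix

variable {ι κ 𝕜 : Type*} [Fintype ι] [Fintype κ]

def IsQuadraticallyInvariant [Semiring 𝕜] (G : Matrix κ ι 𝕜)
    (S : Submodule 𝕜 (Matrix ι κ 𝕜)) : Prop :=
  ∀ K ∈ S, K * G * K ∈ S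

namespace IsQuadraticallyInvariant

theorem mul_mul_add_mul_mul_mem [Ring 𝕜] {G : Matrix κ ι 𝕜} {S : Submodule 𝕜 (Matrix ι κ 𝕜)}
    (hS : S.IsQuadraticallyInvariant G) {K J : Matrix ι κ 𝕜} (hK : K ∈ S) (hJ : J ∈ S) :
    K * G * J + J * G * K ∈ S := by
  convert S.sub_mem (S.sub_mem (hS _ (S.add_mem hK hJ)) (hS K hK)) (hS J hJ) using 1
  simp only [Matrix.add_mul, Matrix.mul_add]
  abel

section Field

variable [Field 𝕜] [NeZero (2 : 𝕜)] [DecidableEq κ] {G : Matrix κ ι 𝕜}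
  {S : Submodule 𝕜 (Matrix ι κ 𝕜)} {K : Matrix ι κ 𝕜}

theorem mul_pow_mem (hS : S.IsQuadraticallyInvariant G) (hK : K ∈ S) (i : ℕ) :
    K * (G * K) ^ i ∈ S := by
  induction i with
  | zero => simpa using hK
  | succ i ih =>
    have hsum := hS.mul_mul_add_mul_mul_mem hK ih
    have hleft : K * G * (K * (G * K) ^ i) = K * (G * K) ^ (i + 1) := by
      rw [pow_succ']; simp only [Matrix.mul_assoc]
    have hright : K * (G * K) ^ i * G * K = K * (G * K) ^ (i + 1) := by
      rw [pow_succ]; simp only [Matrix.mul_assoc]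
    rw [hleft, hright, ← two_smul 𝕜] at hsum
    exact (S.smul_mem_iff two_ne_zero).mp hsum

theorem mul_aeval_mem (hS : S.IsQuadraticallyInvariant G) (hK : K ∈ S) (p : 𝕜[X]) :
    K * aeval (G * K) p ∈ S := by
  rw [aeval_eq_sum_range, Matrix.mul_sum]
  refine S.sum_mem fun i _ => ?_
  rw [Matrix.mul_smul]
  exact S.smul_mem _ (hS.mul_pow_mem hK i)

theorem closedLoop_mem (hS : S.IsQuadraticallyInvariant G) (hK : K ∈ S) : closedLoop G K ∈ S := by
  obtain ⟨p, hp⟩ := exists_inv_one_sub_eq_aeval (G * K)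
  exact S.neg_mem (hp ▸ hS.mul_aeval_mem hK p)

theorem mapsTo_closedLoop (hS : S.IsQuadraticallyInvariant G) :
    MapsTo (closedLoop G) (↑S ∩ wellPosed G) (↑S ∩ wellPosed G) :=
  fun _ hK => ⟨hS.closedLoop_mem hK.1, closedLoop_mem_wellPosed hK.2⟩

theorem image_closedLoop (hS : S.IsQuadraticallyInvariant G) :
    closedLoop G '' (↑S ∩ wellPosed G) = ↑S ∩ wellPosed G :=
  have hinv : LeftInvOn (closedLoop G) (closedLoop G) (↑S ∩ wellPosed G) :=
    fun _ hK => closedLoop_closedLoop hK.2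
  (InvOn.bijOn ⟨hinv, hinv⟩ hS.mapsTo_closedLoop hS.mapsTo_closedLoop).image_eq

end Field

theorem of_mapsTo_closedLoop [NontriviallyNormedField 𝕜] [CompleteSpace 𝕜] [DecidableEq κ]
    {G : Matrix κ ι 𝕜} {S : Submodule 𝕜 (Matrix ι κ 𝕜)}
    (h : MapsTo (closedLoop G) (↑S ∩ wellPosed G) S) : S.IsQuadraticallyInvariant G := by
  intro K hK
  set B := G * K
  have hmem : ∀ t ≠ (0 : 𝕜), IsUnit (1 - t • B).det → K * (1 - t • B)⁻¹ ∈ S := by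
    intro t ht hdet
    have htK : t • K ∈ ↑S ∩ wellPosed G :=
      ⟨S.smul_mem t hK, by rwa [wellPosed, mem_ofPred_eq, Matrix.mul_smul]⟩
    have := h htK
    rw [closedLoop_smul] at this
    exact (S.smul_mem_iff (neg_ne_zero.2 ht)).mp this
  -- `K * G * K` is the derivative at `0` of `t ↦ K * (1 - t • G * K)⁻¹`, which lies in `S`.
  have hdet : ∀ᶠ t in 𝓝 (0 : 𝕜), IsUnit (1 - t • B).det := by
    have hcont : Continuous fun t : 𝕜 => (1 - t • B).det := by fun_prop
    filter_upwards [hcont.continuousAt.eventually_ne (by simp : (1 - (0 : 𝕜) • B).det ≠ 0)]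
      with t ht using isUnit_iff_ne_zero.2 ht
  have hev : ∀ᶠ t in 𝓝[≠] (0 : 𝕜), K * B * (1 - t • B)⁻¹ ∈ S := by
    filter_upwards [nhdsWithin_le_nhds hdet, self_mem_nhdsWithin] with t hdet ht
    rw [← inv_smul_smul₀ ht (K * B * _), ← mul_inv_one_sub_smul_sub_self K B t hdet]
    exact S.smul_mem _ (S.sub_mem (hmem t ht hdet) hK)
  have hlim : Tendsto (fun t : 𝕜 => K * B * (1 - t • B)⁻¹) (𝓝[≠] 0) (𝓝 (K * G * K)) := by
    have hcont : ContinuousAt (fun t : 𝕜 => K * B * (1 - t • B)⁻¹) 0 :=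
      (continuous_const.matrix_mul continuous_id).continuousAt.comp
        (continuousAt_inv_one_sub_smul B)
    convert hcont.tendsto.mono_left nhdsWithin_le_nhds using 2
    simp [B, Matrix.mul_assoc]
  exact S.closed_of_finiteDimensional.mem_of_tendsto hlim hev

end IsQuadraticallyInvariant

end Submodule

theorem stmt_14 {m n : ℕ} (G : Matrix (Fin m) (Fin n) ℝ)
    (S : Submodule ℝ (Matrix (Fin n) (Fin m) ℝ)) :
    (∀ K ∈ S, K * G * K ∈ S) ↔
      (fun K : Matrix (Fin n) (Fin m) ℝ => -(K * (1 - G * K)⁻¹)) ''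
          ((S : Set (Matrix (Fin n) (Fin m) ℝ)) ∩ {K | IsUnit (1 - G * K).det}) =
        (S : Set (Matrix (Fin n) (Fin m) ℝ)) ∩ {K | IsUnit (1 - G * K).det} := by
  change S.IsQuadraticallyInvariant G ↔
    Matrix.closedLoop G '' (↑S ∩ Matrix.wellPosed G) = ↑S ∩ Matrix.wellPosed G
  exact ⟨fun hS => hS.image_closedLoop, fun himage => .of_mapsTo_closedLoop <|
    (mapsTo_image _ _).mono_right (himage.trans_subset inter_subset_left)⟩
end

section
/- Let R be a commutative ring with identity in which 2 is a unit, G ∈ R^{m×n}, and S ⊆ R^{n×m} an R-submodule. If S is quadratically invariant with respect to G, then K·adj(I - GK) ∈ S for all K ∈ S. -/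
open Polynomial Matrix Finset

lemma adj_poly {R : Type*} [CommRing R] {m : ℕ} (M : Matrix (Fin m) (Fin m) R) :
    ∃ p : R[X], M.adjugate = Polynomial.aeval M p := by
  classical
  set p := M.charpoly with hp
  set a : Matrix (Fin m) (Fin m) R[X] := Matrix.scalar (Fin m) (X : R[X]) with ha
  set b : Matrix (Fin m) (Fin m) R[X] := (C : R →+* R[X]).mapMatrix M with hb
  have hcomm : Commute a b := Matrix.scalar_commute _ (fun r' => Commute.all _ _) _
  set Q : Matrix (Fin m) (Fin m) R[X] :=
    ∑ i ∈ range (p.natDegree + 1), p.coeff i • (∑ j ∈ range i, a ^ j * b ^ (i - 1 - j)) with hQ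
  have f : Matrix (Fin m) (Fin m) R →ₐ[R] Matrix (Fin m) (Fin m) R[X] :=
    (Algebra.ofId R R[X]).mapMatrix
  have key1 : charmatrix M * Q = p • (1 : Matrix (Fin m) (Fin m) R[X]) := by
    have hch : charmatrix M = a - b := rfl
    rw [hch, hQ, Finset.mul_sum]
    have hterm : ∀ i ∈ range (p.natDegree + 1),
        (a - b) * (p.coeff i • (∑ j ∈ range i, a ^ j * b ^ (i - 1 - j)))
          = p.coeff i • a ^ i - p.coeff i • b ^ i := by
      intro i _
      rw [mul_smul_comm, hcomm.mul_geom_sum₂, smul_sub]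
    rw [Finset.sum_congr rfl hterm, Finset.sum_sub_distrib]
    have h1 : ∑ x ∈ range (p.natDegree + 1), p.coeff x • a ^ x = aeval a p :=
      (aeval_eq_sum_range a).symm
    have h2 : ∑ x ∈ range (p.natDegree + 1), p.coeff x • b ^ x = aeval b p :=
      (aeval_eq_sum_range b).symm
    have h3 : aeval b p = 0 := by
      have hbf : b = (Algebra.ofId R R[X]).mapMatrix M := rfl
      rw [hbf, aeval_algHom_apply, hp, Matrix.aeval_self_charpoly, map_zero]
    have h4 : aeval a p = p • 1 := by
      have hag : a = ((Algebra.ofId R[X] (Matrix (Fin m) (Fin m) R[X])).restrictScalars R) X := rfl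
      rw [hag, aeval_algHom_apply, aeval_X_left_apply]
      ext i j
      simp [Algebra.ofId_apply, Matrix.algebraMap_matrix_apply, Matrix.one_apply]
    rw [h1, h2, h3, h4, sub_zero]
  have key2 : (charmatrix M).adjugate = Q := by
    have hz : charmatrix M * ((charmatrix M).adjugate - Q) = 0 := by
      rw [mul_sub, Matrix.mul_adjugate, key1]
      rw [show (charmatrix M).det = p from rfl]
      simp
    have hz2 : p • ((charmatrix M).adjugate - Q) = 0 := by
      have := congrArg (fun N => (charmatrix M).adjugate * N) hz
      simpa [← Matrix.mul_assoc, Matrix.adjugate_mul,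
        show (charmatrix M).det = p from rfl, Matrix.smul_mul] using this
    have hreg := (Matrix.charpoly_monic M).isRegular.left
    refine Matrix.ext fun i j => ?_
    have : (p • ((charmatrix M).adjugate - Q)) i j = (0 : Matrix (Fin m) (Fin m) R[X]) i j := by
      rw [hz2]
    simp only [Matrix.smul_apply, Matrix.zero_apply, smul_eq_mul] at this
    have h0 : p * ((charmatrix M).adjugate - Q) i j = p * 0 := by simpa using this
    have := hreg h0
    rw [Matrix.sub_apply, sub_eq_zero] at this
    exact this
  -- evaluate at 0
  set ψ : Matrix (Fin m) (Fin m) R[X] →ₐ[R] Matrix (Fin m) (Fin m) R :=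
    (Polynomial.aeval (0 : R)).mapMatrix with hψ
  have hψch : ψ (charmatrix M) = -M := by
    refine Matrix.ext fun i j => ?_
    simp only [hψ, AlgHom.mapMatrix_apply, Matrix.map_apply, charmatrix_apply,
      Matrix.sub_apply, Matrix.neg_apply, map_sub, Matrix.diagonal_apply, RingHom.mapMatrix_apply]
    split_ifs <;> simp
  have hadj : (-M).adjugate = ψ Q := by
    rw [← hψch, ← AlgHom.map_adjugate, key2]
  set q : R[X] := ∑ i ∈ range (p.natDegree + 1),
      p.coeff i • (∑ j ∈ range i, (0 : R[X]) ^ j * X ^ (i - 1 - j)) with hq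
  have hev : ψ Q = aeval M q := by
    rw [hQ, hq, map_sum, map_sum]
    refine Finset.sum_congr rfl fun i _ => ?_
    rw [_root_.map_smul, _root_.map_smul, map_sum, map_sum]
    congr 1
    refine Finset.sum_congr rfl fun j _ => ?_
    rw [_root_.map_mul, map_pow, map_pow, _root_.map_mul, map_pow, map_pow]
    congr 1
    · congr 1
      refine Matrix.ext fun i' j' => ?_
      simp only [hψ, ha, AlgHom.mapMatrix_apply, Matrix.map_apply, Matrix.scalar_apply,
        Matrix.diagonal_apply, Matrix.zero_apply]
      split_ifs <;> simp
    · congr 1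
      refine Matrix.ext fun i' j' => ?_
      simp [hψ, hb, AlgHom.mapMatrix_apply, aeval_X]
  have hfin : M.adjugate = (-1 : R) ^ (Fintype.card (Fin m) - 1) • aeval M q := by
    have : M = (-1 : R) • (-M) := by simp
    calc M.adjugate = ((-1 : R) • (-M)).adjugate := by rw [← this]
    _ = (-1 : R) ^ (Fintype.card (Fin m) - 1) • (-M).adjugate := Matrix.adjugate_smul _ _
    _ = _ := by rw [hadj, hev]
  exact ⟨(-1 : R) ^ (Fintype.card (Fin m) - 1) • q, by rw [hfin, _root_.map_smul]⟩

theorem stmt_15 {R : Type*} [CommRing R] {m n : ℕ} (h2 : IsUnit (2 : R))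
    (G : Matrix (Fin m) (Fin n) R) (S : Submodule R (Matrix (Fin n) (Fin m) R))
    (hQI : ∀ K ∈ S, K * G * K ∈ S) :
    ∀ K ∈ S, K * (1 - G * K).adjugate ∈ S := by
  intro K hK
  have hinv : ∀ x : Matrix (Fin n) (Fin m) R, (2 : R) • x ∈ S → x ∈ S := by
    intro x hx
    have h := S.smul_mem (↑h2.unit⁻¹ : R) hx
    rwa [smul_smul, IsUnit.val_inv_mul, one_smul] at h
  have hpow : ∀ i : ℕ, K * (G * K) ^ i ∈ S := by
    intro i
    induction i with
    | zero => simpa using hK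
    | succ i ih =>
      set L := K * (G * K) ^ i with hL
      have e1 : K * G * L = K * (G * K) ^ (i + 1) := by
        rw [hL, pow_succ']; simp only [Matrix.mul_assoc]
      have e2 : L * G * K = K * (G * K) ^ (i + 1) := by
        rw [hL, pow_succ]; simp only [Matrix.mul_assoc]
      have hmem : K * G * L + L * G * K ∈ S := by
        have h1 := hQI (K + L) (S.add_mem hK ih)
        have h2' := hQI K hK
        have h3 := hQI L ih
        have expand : (K + L) * G * (K + L) = K * G * K + (K * G * L + L * G * K) + L * G * L := by
          simp only [Matrix.add_mul, Matrix.mul_add]; abel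
        have e : K * G * L + L * G * K = (K + L) * G * (K + L) - K * G * K - L * G * L := by
          rw [expand]; abel
        rw [e]
        exact S.sub_mem (S.sub_mem h1 h2') h3
      refine hinv _ ?_
      have : K * G * L + L * G * K = (2 : R) • (K * (G * K) ^ (i + 1)) := by
        rw [e1, e2, two_smul]
      rwa [this] at hmem
  obtain ⟨p, hp⟩ := adj_poly (1 - G * K)
  have hcomp : Polynomial.aeval (1 - G * K) p
      = Polynomial.aeval (G * K) (p.comp (1 - Polynomial.X)) := by
    rw [Polynomial.aeval_comp]
    congr 1
    simp
  rw [hp, hcomp, Polynomial.aeval_eq_sum_range, Matrix.mul_sum]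
  refine S.sum_mem fun i _ => ?_
  rw [Matrix.mul_smul]
  exact S.smul_mem _ (hpow i)
end

section
/- Let R be a commutative ring with identity such that every residue field of R has at least min(m,n)+1 elements, G ∈ R^{m×n}, and S ⊆ R^{n×m} an R-submodule. If K·adj(I - GK) ∈ S for all K ∈ S, then S is quadratically invariant with respect to G (KGK ∈ S for all K ∈ S). -/
open Polynomial Matrix

/-- A polynomial with constant coefficient 1 is a non-zero-divisor. -/
lemma aux_regular {R : Type*} [CommRing R] (f g : R[X]) (hf : f.coeff 0 = 1)
    (h : f * g = 0) : g = 0 := by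
  suffices hk : ∀ k, g.coeff k = 0 by
    ext k; simp [hk]
  intro k
  induction k using Nat.strong_induction_on with
  | _ k ih =>
    have h0 : (f * g).coeff k = 0 := by rw [h]; simp
    rw [Polynomial.coeff_mul] at h0
    rw [Finset.sum_eq_single (0, k)] at h0
    · simpa [hf] using h0
    · rintro ⟨i, j⟩ hij hne
      have hij' : i + j = k := Finset.HasAntidiagonal.mem_antidiagonal.mp hij
      have hi : i ≠ 0 := by rintro rfl; simp at hij'; exact hne (by simp [hij'])
      have hj : j < k := by omega
      rw [ih j hj, mul_zero]
    · intro hmem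
      exact absurd (Finset.HasAntidiagonal.mem_antidiagonal.mpr (by simp)) hmem

/-- Degree bound on determinants with row-wise degree bounds. -/
lemma aux_det_deg {R : Type*} [CommRing R] {k : Type*} [Fintype k] [DecidableEq k]
    (M : Matrix k k R[X]) (b : k → ℕ) (h : ∀ i j, (M i j).natDegree ≤ b i) :
    (Matrix.det M).natDegree ≤ ∑ i, b i := by
  rw [Matrix.det_apply]
  refine Polynomial.natDegree_sum_le_of_forall_le _ _ fun σ _ => ?_
  have h1 : ((Equiv.Perm.sign σ) • ∏ i, M (σ i) i).natDegree ≤ (∏ i, M (σ i) i).natDegree := by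
    rcases Int.units_eq_one_or (Equiv.Perm.sign σ) with hs | hs
    · rw [hs, one_smul]
    · rw [hs, Units.neg_smul, one_smul, natDegree_neg]
  refine h1.trans ((Polynomial.natDegree_prod_le _ _).trans ?_)
  calc ∑ i, (M (σ i) i).natDegree ≤ ∑ i, b (σ i) := Finset.sum_le_sum fun i _ => h (σ i) i
    _ = ∑ i, b i := Equiv.sum_comp σ b

/-- Degree bound on adjugate entries of a matrix with linear entries. -/
lemma aux_adj_deg {R : Type*} [CommRing R] {k : ℕ}
    (M : Matrix (Fin k) (Fin k) R[X]) (h : ∀ i j, (M i j).natDegree ≤ 1) (i j : Fin k) :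
    ((Matrix.adjugate M) i j).natDegree ≤ k - 1 := by
  rw [Matrix.adjugate_apply]
  have := aux_det_deg (M.updateRow j (Pi.single i 1)) (fun r => if r = j then 0 else 1) ?_
  · refine this.trans ?_
    have heq : (∑ i : Fin k, if i = j then 0 else 1) = (Finset.univ.erase j).card := by
      simp [Finset.sum_ite, Finset.filter_ne']
    rw [heq, Finset.card_erase_of_mem (Finset.mem_univ j)]
    simp
  · intro r c
    rcases eq_or_ne r j with rfl | hr
    · simp only [Matrix.updateRow_self, if_pos rfl]
      rcases eq_or_ne c i with rfl | hc
      · simp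
      · simp [Pi.single_eq_of_ne hc]
    · simp [Matrix.updateRow_ne hr, hr, h r c]

/-- Vandermonde extraction lemma. -/
lemma aux_vand {R : Type*} [CommRing R] {N : Type*} [AddCommGroup N] [Module R N] {d : ℕ}
    (hres : ∀ M : Ideal R, M.IsMaximal →
      ∃ f : Fin (d + 1) → R ⧸ M, Function.Injective f)
    (a : Fin (d + 1) → N) (h : ∀ t : R, ∑ i : Fin (d + 1), t ^ (i : ℕ) • a i = 0) :
    ∀ i, a i = 0 := by
  intro i
  set I : Ideal R := LinearMap.ker (LinearMap.toSpanSingleton R N (a i)) with hI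
  have hV : ∀ v : Fin (d + 1) → R, (Matrix.vandermonde v).det ∈ I := by
    intro v
    set V := Matrix.vandermonde v
    have h2 : ∑ k, ((Matrix.adjugate V * V) i k) • a k
        = ∑ j, (Matrix.adjugate V i j) • (∑ k, (V j k) • a k) := by
      simp only [Matrix.mul_apply, Finset.sum_smul, Finset.smul_sum, mul_smul]
      rw [Finset.sum_comm]
    have h3 : ∑ k, ((Matrix.adjugate V * V) i k) • a k = V.det • a i := by
      rw [Matrix.adjugate_mul]
      simp [Matrix.smul_apply, Matrix.one_apply, ite_smul, mul_smul]
    have h4 : ∀ j, ∑ k, (V j k) • a k = 0 := fun j => by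
      simpa [V, Matrix.vandermonde_apply] using h (v j)
    have : V.det • a i = 0 := by
      rw [← h3, h2]
      simp [h4]
    simpa [hI, LinearMap.mem_ker, LinearMap.toSpanSingleton_apply] using this
  have hItop : I = ⊤ := by
    by_contra hne
    obtain ⟨M, hM, hIM⟩ := Ideal.exists_le_maximal I hne
    obtain ⟨f, hf⟩ := hres M hM
    haveI := hM
    have hsurj : Function.Surjective (Ideal.Quotient.mk M) := Ideal.Quotient.mk_surjective
    choose t ht using fun i => hsurj (f i)
    have hdet : (Matrix.vandermonde t).det ∈ M := hIM (hV t)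
    have : Ideal.Quotient.mk M (Matrix.vandermonde t).det = 0 :=
      (Ideal.Quotient.eq_zero_iff_mem).mpr hdet
    rw [RingHom.map_det] at this
    have hmap : (Ideal.Quotient.mk M).mapMatrix (Matrix.vandermonde t)
        = Matrix.vandermonde (fun i => f i) := by
      ext x y
      simp [Matrix.vandermonde_apply, map_pow, ht]
    rw [hmap] at this
    exact (Matrix.det_vandermonde_ne_zero_iff.mpr hf) this
  have h1 : (1 : R) ∈ I := hItop ▸ Submodule.mem_top
  simpa [hI, LinearMap.mem_ker, LinearMap.toSpanSingleton_apply] using h1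

set_option maxHeartbeats 1000000 in
theorem stmt_16 {R : Type*} [CommRing R] {m n : ℕ}
    (hres : ∀ M : Ideal R, M.IsMaximal →
      ∃ f : Fin (min m n + 1) → R ⧸ M, Function.Injective f)
    (G : Matrix (Fin m) (Fin n) R) (S : Submodule R (Matrix (Fin n) (Fin m) R))
    (hadj : ∀ K ∈ S, K * (1 - G * K).adjugate ∈ S) :
    ∀ K ∈ S, K * G * K ∈ S := by
  intro K hK
  obtain ⟨K', hK'⟩ : ∃ v : Matrix (Fin n) (Fin m) R[X], v = K.map C := ⟨_, rfl⟩
  obtain ⟨G', hG'⟩ : ∃ v : Matrix (Fin m) (Fin n) R[X], v = G.map C := ⟨_, rfl⟩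
  have hGK : G' * K' = (G * K).map C := by rw [hG', hK', Matrix.map_mul]
  have hKG : K' * G' = (K * G).map C := by rw [hG', hK', Matrix.map_mul]
  obtain ⟨Bm, hBm⟩ : ∃ v : Matrix (Fin m) (Fin m) R[X],
    v = 1 - (X : R[X]) • (G' * K') := ⟨_, rfl⟩
  obtain ⟨Bn, hBn⟩ : ∃ v : Matrix (Fin n) (Fin n) R[X],
    v = 1 - (X : R[X]) • (K' * G') := ⟨_, rfl⟩
  obtain ⟨P, hP⟩ : ∃ v : Matrix (Fin n) (Fin m) R[X], v = K' * Bm.adjugate := ⟨_, rfl⟩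
  obtain ⟨Q, hQ⟩ : ∃ v : Matrix (Fin n) (Fin m) R[X], v = (X : R[X]) • P := ⟨_, rfl⟩
  -- entry descriptions
  have hBmE : ∀ i j, Bm i j = (1 : Matrix (Fin m) (Fin m) R[X]) i j - X * C ((G * K) i j) := by
    intro i j
    rw [hBm, hGK]
    simp only [Matrix.sub_apply, Matrix.smul_apply, smul_eq_mul, Matrix.map_apply]
  have hBnE : ∀ i j, Bn i j = (1 : Matrix (Fin n) (Fin n) R[X]) i j - X * C ((K * G) i j) := by
    intro i j
    rw [hBn, hKG]
    simp only [Matrix.sub_apply, Matrix.smul_apply, smul_eq_mul, Matrix.map_apply]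
  have hone : ∀ {k : ℕ} (i j : Fin k), ((1 : Matrix (Fin k) (Fin k) R[X]) i j).natDegree = 0 := by
    intro k i j
    rcases eq_or_ne i j with rfl | hij
    · simp [Matrix.one_apply]
    · simp [Matrix.one_apply, hij]
  have hBm1 : ∀ i j, (Bm i j).natDegree ≤ 1 := by
    intro i j
    rw [hBmE i j]
    refine (natDegree_sub_le _ _).trans (max_le ?_ ?_)
    · rw [hone i j]; omega
    · exact (natDegree_mul_le).trans (by simp [natDegree_X_le])
  have hBn1 : ∀ i j, (Bn i j).natDegree ≤ 1 := by
    intro i j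
    rw [hBnE i j]
    refine (natDegree_sub_le _ _).trans (max_le ?_ ?_)
    · rw [hone i j]; omega
    · exact (natDegree_mul_le).trans (by simp [natDegree_X_le])
  -- determinant equality
  have hdet : Bm.det = Bn.det := by
    have e1 : Bm = 1 - ((X : R[X]) • G') * K' := by rw [hBm, Matrix.smul_mul]
    have e2 : Bn = 1 - K' * ((X : R[X]) • G') := by rw [hBn, Matrix.mul_smul]
    rw [e1, e2, Matrix.det_one_sub_mul_comm]
  -- intertwining
  have hcomm : Bn * K' = K' * Bm := by
    rw [hBn, hBm]
    simp only [Matrix.sub_mul, Matrix.mul_sub, Matrix.one_mul, Matrix.mul_one,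
      Matrix.smul_mul, Matrix.mul_smul, Matrix.mul_assoc]
  -- constant coefficient of det Bn is 1
  have hc : Bn.det.coeff 0 = 1 := by
    have h1 : (constantCoeff : R[X] →+* R).mapMatrix Bn = 1 := by
      refine Matrix.ext fun i j => ?_
      rw [RingHom.mapMatrix_apply, Matrix.map_apply, hBnE i j]
      rcases eq_or_ne i j with rfl | hij
      · simp [Matrix.one_apply]
      · simp [Matrix.one_apply, hij]
    have h2 := (RingHom.map_det (constantCoeff : R[X] →+* R) Bn)
    rw [h1, Matrix.det_one] at h2
    rw [← Polynomial.constantCoeff_apply]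
    exact h2
  -- the swap identity
  have hswap : P = Bn.adjugate * K' := by
    have h1 : Bn * P = Bm.det • K' := by
      rw [hP, ← Matrix.mul_assoc, hcomm, Matrix.mul_assoc, Matrix.mul_adjugate,
        Matrix.mul_smul, Matrix.mul_one]
    have h2 : Bn * (Bn.adjugate * K') = Bn.det • K' := by
      rw [← Matrix.mul_assoc, Matrix.mul_adjugate, Matrix.smul_mul, Matrix.one_mul]
    have h4 : Bn * (P - Bn.adjugate * K') = 0 := by
      rw [Matrix.mul_sub, h1, h2, hdet, sub_self]
    have h3 : Bn.det • (P - Bn.adjugate * K') = 0 := by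
      calc Bn.det • (P - Bn.adjugate * K') = (Bn.adjugate * Bn) * (P - Bn.adjugate * K') := by
            rw [Matrix.adjugate_mul, Matrix.smul_mul, Matrix.one_mul]
        _ = Bn.adjugate * (Bn * (P - Bn.adjugate * K')) := Matrix.mul_assoc _ _ _
        _ = 0 := by rw [h4, Matrix.mul_zero]
    have h5 : P - Bn.adjugate * K' = 0 := by
      refine Matrix.ext fun x y => ?_
      have h6 : Bn.det * (P - Bn.adjugate * K') x y = 0 := by
        have := congrFun (congrFun h3 x) y
        simpa [Matrix.smul_apply, smul_eq_mul] using this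
      simpa using aux_regular _ _ hc h6
    exact sub_eq_zero.mp h5
  -- degree bound on Q
  have hQdeg : ∀ (x : Fin n) (y : Fin m), (Q x y).natDegree ≤ min m n := by
    intro x y
    have hm : 0 < m := y.pos
    have hn : 0 < n := x.pos
    have hPd : (P x y).natDegree ≤ min m n - 1 := by
      rcases le_total m n with hmn | hmn
      · rw [min_eq_left hmn]
        have he : P x y = ∑ l, K' x l * Bm.adjugate l y := by
          rw [hP, Matrix.mul_apply]
        rw [he]
        refine Polynomial.natDegree_sum_le_of_forall_le _ _ fun l _ => ?_
        refine (natDegree_mul_le).trans ?_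
        have h7 := aux_adj_deg Bm hBm1 l y
        rw [hK']
        simp only [Matrix.map_apply, natDegree_C, zero_add]
        exact h7
      · rw [min_eq_right hmn]
        have he : P x y = ∑ l, Bn.adjugate x l * K' l y := by
          rw [hswap, Matrix.mul_apply]
        rw [he]
        refine Polynomial.natDegree_sum_le_of_forall_le _ _ fun l _ => ?_
        refine (natDegree_mul_le).trans ?_
        have h7 := aux_adj_deg Bn hBn1 x l
        rw [hK']
        simp only [Matrix.map_apply, natDegree_C, add_zero]
        exact h7
    have hXP : Q x y = X * P x y := by
      rw [hQ]; simp [Matrix.smul_apply, smul_eq_mul]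
    rw [hXP]
    refine (natDegree_mul_le).trans ?_
    have hD1 : 1 ≤ min m n := by omega
    have := natDegree_X_le (R := R)
    omega
  -- evaluation lands in S
  have hevalQ : ∀ t : R, Q.map (Polynomial.eval t) ∈ S := by
    intro t
    have hBmmap : Bm.map (Polynomial.eval t) = 1 - t • (G * K) := by
      refine Matrix.ext fun i j => ?_
      rw [Matrix.map_apply, hBmE i j]
      have h1e : Polynomial.eval t ((1 : Matrix (Fin m) (Fin m) R[X]) i j)
          = (1 : Matrix (Fin m) (Fin m) R) i j := by
        rcases eq_or_ne i j with rfl | hij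
        · simp [Matrix.one_apply]
        · simp [Matrix.one_apply, hij]
      rw [Polynomial.eval_sub, Polynomial.eval_mul, Polynomial.eval_X, Polynomial.eval_C, h1e,
        Matrix.sub_apply, Matrix.smul_apply, smul_eq_mul]
    have hKmap : K'.map (Polynomial.eval t) = K := by
      rw [hK']; refine Matrix.ext fun i j => ?_; simp [Matrix.map_apply]
    have hPmap : P.map (Polynomial.eval t) = K * (1 - t • (G * K)).adjugate := by
      rw [hP, ← Polynomial.coe_evalRingHom, Matrix.map_mul, Polynomial.coe_evalRingHom, hKmap]
      congr 1
      have h8 := RingHom.map_adjugate (Polynomial.evalRingHom t) Bm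
      rw [RingHom.mapMatrix_apply, RingHom.mapMatrix_apply, Polynomial.coe_evalRingHom] at h8
      rw [h8, hBmmap]
    have hQmap : Q.map (Polynomial.eval t) = t • (K * (1 - t • (G * K)).adjugate) := by
      rw [← hPmap]
      refine Matrix.ext fun x y => ?_
      rw [hQ]
      simp [Matrix.map_apply, Matrix.smul_apply, smul_eq_mul]
    rw [hQmap]
    have h1 : (t • K) ∈ S := S.smul_mem t hK
    have h2 := hadj (t • K) h1
    have h3 : G * (t • K) = t • (G * K) := Matrix.mul_smul _ _ _
    have h4 : (t • K) * (1 - G * (t • K)).adjugate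
        = t • (K * (1 - t • (G * K)).adjugate) := by
      rw [h3, Matrix.smul_mul]
    rwa [h4] at h2
  -- coefficient matrices
  obtain ⟨cM, hcM⟩ : ∃ v : ℕ → Matrix (Fin n) (Fin m) R,
    v = fun i => Matrix.of fun x y => (Q x y).coeff i := ⟨_, rfl⟩
  have hcME : ∀ i x y, cM i x y = (Q x y).coeff i := by
    intro i x y; rw [hcM]; rfl
  have key : ∀ i : Fin (min m n + 1), cM (i : ℕ) ∈ S := by
    have hsum : ∀ t : R, ∑ i : Fin (min m n + 1),
        t ^ (i : ℕ) • (S.mkQ (cM (i : ℕ))) = 0 := by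
      intro t
      have hsum2 : ∑ i : Fin (min m n + 1), t ^ (i : ℕ) • cM (i : ℕ)
          = Q.map (Polynomial.eval t) := by
        refine Matrix.ext fun x y => ?_
        rw [Matrix.sum_apply]
        simp only [Matrix.smul_apply, smul_eq_mul, Matrix.map_apply, hcME]
        rw [Polynomial.eval_eq_sum_range' (lt_of_le_of_lt (hQdeg x y) (Nat.lt_succ_self _)) t]
        rw [← Fin.sum_univ_eq_sum_range (fun i => (Q x y).coeff i * t ^ i)]
        exact Finset.sum_congr rfl fun i _ => mul_comm _ _
      have h9 : ∑ i : Fin (min m n + 1), t ^ (i : ℕ) • (S.mkQ (cM (i : ℕ)))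
          = S.mkQ (∑ i : Fin (min m n + 1), t ^ (i : ℕ) • cM (i : ℕ)) := by
        rw [map_sum]
        exact Finset.sum_congr rfl fun i _ => (S.mkQ.map_smul _ _).symm
      rw [h9, hsum2]
      exact (Submodule.Quotient.mk_eq_zero S).mpr (hevalQ t)
    intro i
    have := aux_vand hres (fun i : Fin (min m n + 1) => S.mkQ (cM (i : ℕ))) hsum i
    exact (Submodule.Quotient.mk_eq_zero S).mp this
  -- the coefficient-2 matrix is in S
  have hc2 : cM 2 ∈ S := by
    by_cases h2 : 2 ≤ min m n
    · exact key ⟨2, by omega⟩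
    · have hz : cM 2 = 0 := by
        refine Matrix.ext fun x y => ?_
        rw [hcME]
        simp only [Matrix.zero_apply]
        exact Polynomial.coeff_eq_zero_of_natDegree_lt (lt_of_le_of_lt (hQdeg x y) (by omega))
      rw [hz]; exact S.zero_mem
  -- identify cM 2
  have hadjBm : Bm.adjugate = Bm.det • (1 : Matrix (Fin m) (Fin m) R[X])
      + (X : R[X]) • ((G' * K') * Bm.adjugate) := by
    have h5 : Bm * Bm.adjugate = Bm.adjugate - (X : R[X]) • ((G' * K') * Bm.adjugate) := by
      rw [hBm, Matrix.sub_mul, Matrix.one_mul, Matrix.smul_mul]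
    have h6 := Matrix.mul_adjugate Bm
    rw [h5] at h6
    exact sub_eq_iff_eq_add.mp h6
  obtain ⟨W, hW⟩ : ∃ v : Matrix (Fin n) (Fin m) R[X],
    v = K' * ((G' * K') * Bm.adjugate) := ⟨_, rfl⟩
  have hP2 : P = Bm.det • K' + (X : R[X]) • W := by
    rw [hP, hadjBm, Matrix.mul_add, Matrix.mul_smul, Matrix.mul_one, Matrix.mul_smul, hW]
  have hWmap : W.map (constantCoeff : R[X] →+* R) = K * G * K := by
    have hKmap : K'.map (constantCoeff : R[X] →+* R) = K := by
      rw [hK']; refine Matrix.ext fun i j => ?_; simp [Matrix.map_apply]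
    have hGKmap : (G' * K').map (constantCoeff : R[X] →+* R) = G * K := by
      rw [hGK]; refine Matrix.ext fun i j => ?_
      simp only [Matrix.map_apply, Polynomial.constantCoeff_apply, Polynomial.coeff_C_zero]
    have hBmmap : Bm.map (constantCoeff : R[X] →+* R) = 1 := by
      refine Matrix.ext fun i j => ?_
      rw [Matrix.map_apply, hBmE i j]
      rcases eq_or_ne i j with rfl | hij
      · simp [Matrix.one_apply]
      · simp [Matrix.one_apply, hij]
    have hadjmap : Bm.adjugate.map (constantCoeff : R[X] →+* R) = 1 := by
      have h10 := RingHom.map_adjugate (constantCoeff : R[X] →+* R) Bm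
      rw [RingHom.mapMatrix_apply, RingHom.mapMatrix_apply] at h10
      rw [h10, hBmmap, Matrix.adjugate_one]
    rw [hW, Matrix.map_mul, Matrix.map_mul, hKmap, hGKmap, hadjmap,
      Matrix.mul_one, ← Matrix.mul_assoc]
  have hfinal : cM 2 = Bm.det.coeff 1 • K + K * G * K := by
    refine Matrix.ext fun x y => ?_
    have e1 : (Q x y).coeff 2 = (P x y).coeff 1 := by
      have h11 : Q x y = X * P x y := by
        rw [hQ]; simp [Matrix.smul_apply, smul_eq_mul]
      rw [h11]
      exact Polynomial.coeff_X_mul _ 1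
    have e2 : (P x y).coeff 1 = Bm.det.coeff 1 * K x y + (W x y).coeff 0 := by
      have h12 : P x y = Bm.det * C (K x y) + X * W x y := by
        rw [hP2, hK']
        simp [Matrix.add_apply, Matrix.smul_apply, smul_eq_mul, Matrix.map_apply]
      rw [h12, Polynomial.coeff_add, Polynomial.coeff_mul_C, Polynomial.coeff_X_mul]
    have e3 : (W x y).coeff 0 = (K * G * K) x y := by
      have := congrFun (congrFun hWmap x) y
      simpa [Matrix.map_apply, Polynomial.constantCoeff_apply] using this
    rw [hcME, Matrix.add_apply, Matrix.smul_apply, smul_eq_mul, e1, e2, e3]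
  have hsmem : Bm.det.coeff 1 • K ∈ S := S.smul_mem _ hK
  have hKGK := S.sub_mem hc2 hsmem
  rw [hfinal] at hKGK
  simpa using hKGK
end

section
/- Over the ring Z of integers, let S = { [[2x, y, z],[y, z, 0],[z, 0, 0]] : x,y,z ∈ Z } and G = [[0,0,0],[0,0,1],[0,1,0]]. Then S is a Z-module that is quadratically invariant with respect to G (KGK ∈ S for all K ∈ S), yet for K₀ = [[0,0,1],[0,1,0],[1,0,0]] ∈ S one has K₀·adj(I - GK₀) ∉ S. -/
theorem stmt_17 :
    let S : Set (Matrix (Fin 3) (Fin 3) ℤ) :=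
      {A | ∃ x y z : ℤ, A = !![2 * x, y, z; y, z, 0; z, 0, 0]}
    let G : Matrix (Fin 3) (Fin 3) ℤ := !![0, 0, 0; 0, 0, 1; 0, 1, 0]
    let K₀ : Matrix (Fin 3) (Fin 3) ℤ := !![0, 0, 1; 0, 1, 0; 1, 0, 0]
    (0 : Matrix (Fin 3) (Fin 3) ℤ) ∈ S ∧
      (∀ A ∈ S, ∀ B ∈ S, A + B ∈ S) ∧
      (∀ c : ℤ, ∀ A ∈ S, c • A ∈ S) ∧
      (∀ K ∈ S, K * G * K ∈ S) ∧
      K₀ ∈ S ∧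
      K₀ * (1 - G * K₀).adjugate ∉ S := by
  intro S G K₀
  refine ⟨⟨0, 0, 0, ?_⟩, ?_, ?_, ?_, ⟨0, 0, 1, ?_⟩, ?_⟩
  · ext i j; fin_cases i <;> fin_cases j <;> simp [K₀, Matrix.vecHead, Matrix.vecTail]
  · rintro A ⟨x, y, z, rfl⟩ B ⟨a, b, c, rfl⟩
    exact ⟨x + a, y + b, z + c, by ext i j; fin_cases i <;> fin_cases j <;> simp [Matrix.vecHead, Matrix.vecTail] <;> ring⟩
  · rintro c A ⟨x, y, z, rfl⟩
    exact ⟨c * x, c * y, c * z, by ext i j; fin_cases i <;> fin_cases j <;> simp [Matrix.vecHead, Matrix.vecTail] <;> ring⟩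
  · rintro K ⟨x, y, z, rfl⟩
    refine ⟨y * z, z ^ 2, 0, ?_⟩
    ext i j
    fin_cases i <;> fin_cases j <;>
      simp [G, Matrix.mul_apply, Fin.sum_univ_succ, Matrix.vecHead, Matrix.vecTail] <;> ring
  · ext i j; fin_cases i <;> fin_cases j <;> simp [K₀, Matrix.vecHead, Matrix.vecTail]
  · rintro ⟨x, y, z, h⟩
    have h1 : K₀ * (1 - G * K₀).adjugate = !![1,1,1;1,1,0;1,0,0] := by
      have : (1 : Matrix (Fin 3) (Fin 3) ℤ) - G * K₀ = !![1,0,0;-1,1,0;0,-1,1] := by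
        ext i j
        fin_cases i <;> fin_cases j <;>
          simp [G, K₀, Matrix.mul_apply, Fin.sum_univ_succ, Matrix.one_apply, Matrix.vecHead, Matrix.vecTail]
      rw [this, Matrix.adjugate_fin_three]
      ext i j
      fin_cases i <;> fin_cases j <;>
        simp [K₀, Matrix.mul_apply, Fin.sum_univ_succ, Matrix.vecHead, Matrix.vecTail]
    rw [h1] at h
    have := congrFun (congrFun h 0) 0
    simp at this
    omega
end

section
/- For any matrices G ∈ R^{m×n} and K ∈ R^{n×m} over a commutative ring R with identity, K·adj(I_m - GK) = adj(I_n - KG)·K. -/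
open Polynomial Matrix

lemma isLeftRegular_of_coeff_zero_one {R : Type*} [CommRing R] {p : R[X]}
    (hp : p.coeff 0 = 1) : IsLeftRegular p := by
  have key : ∀ q : R[X], p * q = 0 → q = 0 := by
    intro q hq
    by_contra hq0
    have hd := Polynomial.trailingCoeff_nonzero_iff_nonzero.mpr hq0
    apply hd
    have h0 : (p * q).coeff q.natTrailingDegree = 0 := by rw [hq, Polynomial.coeff_zero]
    rw [Polynomial.coeff_mul] at h0
    rw [Finset.sum_eq_single (0, q.natTrailingDegree)] at h0
    · simpa [hp, Polynomial.trailingCoeff] using h0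
    · rintro ⟨i, j⟩ hmem hne
      rcases Nat.lt_or_ge j q.natTrailingDegree with h | h
      · rw [Polynomial.coeff_eq_zero_of_lt_natTrailingDegree h, mul_zero]
      · have hij : i + j = q.natTrailingDegree := Finset.HasAntidiagonal.mem_antidiagonal.mp hmem
        exact absurd (Prod.ext (by omega) (by omega)) hne
    · intro h
      exact absurd (Finset.HasAntidiagonal.mem_antidiagonal.mpr (by simp)) h
  intro a b hab
  have hab' : p * a = p * b := hab
  exact sub_eq_zero.mp (key _ (by rw [mul_sub, hab', sub_self]))

theorem stmt_18 {R : Type*} [CommRing R] {m n : ℕ}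
    (G : Matrix (Fin m) (Fin n) R) (K : Matrix (Fin n) (Fin m) R) :
    K * (1 - G * K).adjugate = (1 - K * G).adjugate * K := by
  set G' : Matrix (Fin m) (Fin n) R[X] := G.map Polynomial.C with hG'
  set K' : Matrix (Fin n) (Fin m) R[X] := (Polynomial.X : R[X]) • K.map Polynomial.C with hK'
  set A : Matrix (Fin m) (Fin m) R[X] := 1 - G' * K' with hA
  set B : Matrix (Fin n) (Fin n) R[X] := 1 - K' * G' with hB
  have hBmap0 : B.map (Polynomial.evalRingHom (0 : R)) = 1 := by
    ext i j
    simp only [hB, hK', Matrix.map_apply, Matrix.sub_apply, Matrix.mul_apply,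
      Matrix.smul_apply, Matrix.one_apply, smul_eq_mul]
    split <;> simp [Matrix.map_apply, Polynomial.eval_finset_sum]
  have hcoeff : (B.det).coeff 0 = 1 := by
    rw [Polynomial.coeff_zero_eq_eval_zero]
    have h1 : Polynomial.eval 0 B.det = (Polynomial.evalRingHom (0 : R)) B.det := rfl
    rw [h1, RingHom.map_det]
    simp only [RingHom.mapMatrix_apply]
    rw [hBmap0, Matrix.det_one]
  have hreg : IsLeftRegular B.det := isLeftRegular_of_coeff_zero_one hcoeff
  have hcomm : B * K' = K' * A := by
    simp [hA, hB, Matrix.sub_mul, Matrix.mul_sub, Matrix.mul_assoc]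
  have hdet : A.det = B.det := Matrix.det_one_sub_mul_comm G' K'
  have hmain : K' * A.adjugate = B.adjugate * K' := by
    have hcancel : ∀ X Y : Matrix (Fin n) (Fin m) R[X], B * X = B * Y → X = Y := by
      intro X Y h
      have h2 := congrArg (fun M => B.adjugate * M) h
      simp only [← Matrix.mul_assoc, Matrix.adjugate_mul, Matrix.smul_mul,
        Matrix.one_mul] at h2
      refine Matrix.ext fun i j => hreg ?_
      have h4 := congrFun (congrFun h2 i) j
      simpa [Matrix.smul_apply, smul_eq_mul] using h4
    apply hcancel
    calc B * (K' * A.adjugate)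
        = (B * K') * A.adjugate := by rw [Matrix.mul_assoc]
      _ = K' * (A * A.adjugate) := by rw [hcomm, Matrix.mul_assoc]
      _ = A.det • K' := by rw [Matrix.mul_adjugate, Matrix.mul_smul, Matrix.mul_one]
      _ = B.det • K' := by rw [hdet]
      _ = (B.det • (1 : Matrix (Fin n) (Fin n) R[X])) * K' := by
          rw [Matrix.smul_mul, Matrix.one_mul]
      _ = B * (B.adjugate * K') := by rw [← Matrix.mul_adjugate, Matrix.mul_assoc]
  have hmap : (K' * A.adjugate).map (Polynomial.evalRingHom (1 : R))
      = (B.adjugate * K').map (Polynomial.evalRingHom (1 : R)) := by rw [hmain]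
  simp only [Matrix.map_mul] at hmap
  have hKmap : K'.map (Polynomial.evalRingHom (1 : R)) = K := by
    ext i j; simp [hK', Matrix.map_apply]
  have hAmap : A.map (Polynomial.evalRingHom (1 : R)) = 1 - G * K := by
    ext i j
    simp only [hA, hG', hK', Matrix.map_apply, Matrix.sub_apply, Matrix.mul_apply,
      Matrix.smul_apply, Matrix.one_apply, smul_eq_mul]
    split <;> simp [Matrix.map_apply, Polynomial.eval_finset_sum]
  have hBmap : B.map (Polynomial.evalRingHom (1 : R)) = 1 - K * G := by
    ext i j
    simp only [hB, hG', hK', Matrix.map_apply, Matrix.sub_apply, Matrix.mul_apply,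
      Matrix.smul_apply, Matrix.one_apply, smul_eq_mul]
    split <;> simp [Matrix.map_apply, Polynomial.eval_finset_sum]
  rw [show A.adjugate.map ⇑(Polynomial.evalRingHom (1 : R))
        = (Polynomial.evalRingHom (1 : R)).mapMatrix A.adjugate from rfl,
      show B.adjugate.map ⇑(Polynomial.evalRingHom (1 : R))
        = (Polynomial.evalRingHom (1 : R)).mapMatrix B.adjugate from rfl,
      RingHom.map_adjugate, RingHom.map_adjugate, hKmap] at hmap
  rw [show (Polynomial.evalRingHom (1 : R)).mapMatrix A = 1 - G * K from hAmap,
      show (Polynomial.evalRingHom (1 : R)).mapMatrix B = 1 - K * G from hBmap] at hmap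
  exact hmap
end
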